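/- Every infinite set ℬ ⊂ ℕ contains a strictly increasing sequence (b_n)_{n∈ℕ} such that the set {b_1, b_2, b_3, ...} is admissible, i.e., for every prime p there exists a residue class modulo p containing no b_n. -/

import Mathlib

private lemma exists_infinite_residue (S : Set ℕ) (hS : S.Infinite) {p : ℕ} (hp : 0 < p) :
    ∃ r, r < p ∧ {x ∈ S | x % p = r}.Infinite := by
  by_contra h
  push_neg at h
  apply hS
  have hsub : S ⊆ ⋃ r ∈ Finset.range p, {x ∈ S | x % p = r} := by
    intro x hx
    simp only [Set.mem_iUnion]
    exact ⟨x % p, Finset.mem_range.2 (Nat.mod_lt _ hp), hx, rfl⟩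
  refine Set.Finite.subset (Set.Finite.biUnion (Finset.range p).finite_toSet ?_) hsub
  intro r hr
  exact h r (Finset.mem_range.mp hr)

private lemma nth_prime_ge (k : ℕ) : k + 2 ≤ Nat.nth Nat.Prime k := by
  induction k with
  | zero => exact (Nat.nth_mem_of_infinite Nat.infinite_setOf_prime 0).two_le
  | succ n ih =>
      have h : Nat.nth Nat.Prime n < Nat.nth Nat.Prime (n + 1) :=
        Nat.nth_strictMono Nat.infinite_setOf_prime (Nat.lt_succ_self n)
      omega

/-- Every infinite set `B ⊆ ℕ` contains a strictly increasing sequence `(b n)`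
whose set of values is admissible: for every prime `p` there is a residue class
mod `p` containing no `b n`. -/
theorem infinite_set_contains_admissible_sequence
    (B : Set ℕ) (hB : B.Infinite) :
    ∃ b : ℕ → ℕ, StrictMono b ∧ (∀ n, b n ∈ B) ∧
      (∀ p : ℕ, p.Prime → ∃ r : ℕ, ∀ n, b n % p ≠ r) := by
  classical
  set pk : ℕ → ℕ := fun k => Nat.nth Nat.Prime k with hpk
  have hpk_prime : ∀ k, (pk k).Prime :=
    fun k => Nat.nth_mem_of_infinite Nat.infinite_setOf_prime k
  have hpk_pos : ∀ k, 0 < pk k := fun k => (hpk_prime k).pos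
  -- step: refine an infinite set to an infinite subset in one residue class mod pk k
  have step : ∀ (S : Set ℕ), S.Infinite → ∀ k : ℕ,
      ∃ r, r < pk k ∧ {x ∈ S | x % pk k = r}.Infinite :=
    fun S hS k => exists_infinite_residue S hS (hpk_pos k)
  choose r hr1 hr2 using step
  -- the nested chain of infinite sets
  let S : ℕ → {s : Set ℕ // s.Infinite} := fun n =>
    Nat.rec ⟨B, hB⟩
      (fun k ih => ⟨{x ∈ ih.1 | x % pk k = r ih.1 ih.2 k}, hr2 ih.1 ih.2 k⟩) n
  have hS0 : (S 0).1 = B := rfl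
  have hSsucc : ∀ k, (S (k + 1)).1 = {x ∈ (S k).1 | x % pk k = r (S k).1 (S k).2 k} :=
    fun k => rfl
  have hSsub : ∀ k, (S (k + 1)).1 ⊆ (S k).1 := by
    intro k x hx
    rw [hSsucc] at hx
    exact hx.1
  have hSmono : ∀ k n, k ≤ n → (S n).1 ⊆ (S k).1 := by
    intro k n hkn
    induction n with
    | zero => simp_all
    | succ m ih =>
        rcases Nat.lt_or_ge k (m + 1) with h | h
        · exact (ih (Nat.lt_succ_iff.mp h)).trans' (hSsub m)
        · have : k = m + 1 := le_antisymm hkn h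
          subst this
          exact subset_rfl
  have hShom : ∀ k, ∀ x ∈ (S (k + 1)).1, x % pk k = r (S k).1 (S k).2 k := by
    intro k x hx
    rw [hSsucc] at hx
    exact hx.2
  -- construct the sequence
  have bstep : ∀ (n m : ℕ), ∃ x ∈ (S (n + 1)).1, m < x :=
    fun n m => (S (n + 1)).2.exists_gt m
  choose f hf1 hf2 using bstep
  let b : ℕ → ℕ := fun n => Nat.rec (f 0 0) (fun n ih => f (n + 1) ih) n
  have hbmem : ∀ n, b n ∈ (S (n + 1)).1 := by
    intro n
    cases n with
    | zero => exact hf1 0 0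
    | succ m => exact hf1 (m + 1) (b m)
  have hbmono : StrictMono b := by
    apply strictMono_nat_of_lt_succ
    intro n
    exact hf2 (n + 1) (b n)
  refine ⟨b, hbmono, fun n => hSmono 0 (n + 1) (Nat.zero_le _) (hbmem n), ?_⟩
  intro p hp
  set k : ℕ := Nat.count Nat.Prime p with hk
  have hpkk : pk k = p := Nat.nth_count hp
  set rk : ℕ := r (S k).1 (S k).2 k with hrk
  set F : Finset ℕ := insert rk ((Finset.range k).image fun i => b i % p) with hF
  have hFcard : F.card ≤ k + 1 := by
    calc F.card ≤ ((Finset.range k).image fun i => b i % p).card + 1 :=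
          Finset.card_insert_le _ _
      _ ≤ k + 1 := by
          have := Finset.card_image_le (s := Finset.range k) (f := fun i => b i % p)
          simp only [Finset.card_range] at this
          omega
  have hFsub : F ⊆ Finset.range p := by
    intro x hx
    rw [hF] at hx
    rcases Finset.mem_insert.mp hx with h | h
    · rw [Finset.mem_range]
      have := hr1 (S k).1 (S k).2 k
      rw [hpkk] at this
      omega
    · obtain ⟨i, _, hi⟩ := Finset.mem_image.mp h
      rw [Finset.mem_range, ← hi]
      exact Nat.mod_lt _ hp.pos
  have hpk2 : k + 2 ≤ p := by
    have := nth_prime_ge k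
    rw [← hpkk]
    exact this
  have hne : ¬ Finset.range p ⊆ F := by
    intro hsub
    have := Finset.card_le_card hsub
    rw [Finset.card_range] at this
    omega
  obtain ⟨r0, hr0mem, hr0notmem⟩ := Finset.exists_of_ssubset ⟨hFsub, hne⟩
  refine ⟨r0, fun n => ?_⟩
  rcases Nat.lt_or_ge n k with h | h
  · intro hcontra
    apply hr0notmem
    rw [hF]
    exact Finset.mem_insert_of_mem (Finset.mem_image.mpr ⟨n, Finset.mem_range.mpr h, hcontra⟩)
  · intro hcontra
    apply hr0notmem
    have hmem : b n ∈ (S (k + 1)).1 :=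
      hSmono (k + 1) (n + 1) (by omega) (hbmem n)
    have := hShom k (b n) hmem
    rw [hpkk] at this
    have hr0eq : r0 = rk := by omega
    rw [hF, hr0eq]
    exact Finset.mem_insert_self _ _
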